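/- arXiv:2310.03736 — 5 statements merged into one kernel-verified Lean document; each statement's English description precedes it below -/
import Mathlib

section
/- If some connected component S of the formula graph G_C satisfies S = S̄ (i.e., contains a pair of complementary vertices), then no boolean assignment simultaneously satisfies the antisymmetry constraints x_{i,j} = ¬x_{j,i} and the component-equality constraints (x constant on each component of G_C). Otherwise, writing the vertex set as a disjoint union of complementary pairs of components S_1 ∪ S̄_1 ∪ ... ∪ S_k ∪ S̄_k, the satisfying assignments are exactly those obtained from some tuple (s_1,...,s_k) ∈ {0,1}^k by setting x_u = s_i for u ∈ S_i and x_u = ¬s_i for u ∈ S̄_i. -/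
/-!
Reversing pairs maps edges of `G_C` to edges, hence components to components. An assignment
that is antisymmetric and constant on components therefore takes opposite values on `S` and `S̄`,
which is impossible when `S = S̄`. Otherwise it is determined by its values `s_i` on the
`S_i`, and conversely any choice of the `s_i` gives an assignment that is constant on every
`S_i` and `S̄_i`, which is all the component-equality constraints ask for.
-/

/-- Ordered pairs of distinct elements: the vertices of the formula graph. -/
abbrev Pairs (V : Type*) := {p : V × V // p.1 ≠ p.2}

/-- The complementary (reversed) vertex. -/
def pswap {V : Type*} (u : Pairs V) : Pairs V := ⟨(u.1.2, u.1.1), u.2.symm⟩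

/-- Adjacency in the formula graph `G_C`. -/
def FGAdj {V : Type*} (C : Set (V × V × V)) (u v : Pairs V) : Prop :=
  ∃ c ∈ C, (u.1 = (c.1, c.2.1) ∧ v.1 = (c.2.2, c.2.1)) ∨
           (u.1 = (c.2.1, c.1) ∧ v.1 = (c.2.1, c.2.2))

/-- `S` is a connected component of the formula graph. -/
def IsComp {V : Type*} (C : Set (V × V × V)) (S : Set (Pairs V)) : Prop :=
  ∃ u, S = {v | Relation.EqvGen (FGAdj C) u v}

/-- The antisymmetry constraints `x_{i,j} = ¬ x_{j,i}`. -/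
def Antisym {V : Type*} (x : Pairs V → Bool) : Prop :=
  ∀ u, x (pswap u) = !x u

/-- The component-equality constraints: `x` is constant on each connected component. -/
def CompConst {V : Type*} (C : Set (V × V × V)) (x : Pairs V → Bool) : Prop :=
  ∀ u v, Relation.EqvGen (FGAdj C) u v → x u = x v


open Relation

section

variable {V : Type*} {C : Set (V × V × V)} {S : Set (Pairs V)} {x : Pairs V → Bool}

@[simp]
lemma pswap_pswap (u : Pairs V) : pswap (pswap u) = u := rfl

lemma fgAdj_pswap {u v : Pairs V} (h : FGAdj C u v) : FGAdj C (pswap u) (pswap v) := by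
  obtain ⟨c, hc, h | h⟩ := h
  · exact ⟨c, hc, Or.inr ⟨by simp [pswap, h.1], by simp [pswap, h.2]⟩⟩
  · exact ⟨c, hc, Or.inl ⟨by simp [pswap, h.1], by simp [pswap, h.2]⟩⟩

lemma eqvGen_fgAdj_pswap {u v : Pairs V} (h : EqvGen (FGAdj C) u v) :
    EqvGen (FGAdj C) (pswap u) (pswap v) := by
  induction h with
  | rel a b hab => exact .rel _ _ (fgAdj_pswap hab)
  | refl a => exact .refl _
  | symm a b _ ih => exact .symm _ _ ih
  | trans a b c _ _ ih₁ ih₂ => exact .trans _ _ _ ih₁ ih₂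

lemma IsComp.nonempty (hS : IsComp C S) : S.Nonempty := by
  obtain ⟨w, rfl⟩ := hS
  exact ⟨w, EqvGen.refl w⟩

lemma IsComp.mem_of_eqvGen (hS : IsComp C S) {u v : Pairs V} (hu : u ∈ S)
    (huv : EqvGen (FGAdj C) u v) : v ∈ S := by
  obtain ⟨w, rfl⟩ := hS
  exact EqvGen.trans _ _ _ hu huv

lemma IsComp.image_pswap (hS : IsComp C S) : IsComp C (pswap '' S) := by
  obtain ⟨w, rfl⟩ := hS
  refine ⟨pswap w, Set.ext fun v => ⟨?_, fun hv => ⟨pswap v, ?_, pswap_pswap v⟩⟩⟩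
  · rintro ⟨v, hv, rfl⟩
    exact eqvGen_fgAdj_pswap hv
  · simpa using eqvGen_fgAdj_pswap hv

lemma CompConst.eq_of_mem (hx : CompConst C x) (hS : IsComp C S) {u v : Pairs V}
    (hu : u ∈ S) (hv : v ∈ S) : x u = x v := by
  obtain ⟨w, rfl⟩ := hS
  exact (hx w u hu).symm.trans (hx w v hv)

lemma CompConst.exists_eq_on (hx : CompConst C x) (hS : IsComp C S) :
    ∃ b, ∀ u ∈ S, x u = b := by
  obtain ⟨w, hw⟩ := hS.nonempty
  exact ⟨x w, fun u hu => hx.eq_of_mem hS hu hw⟩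

lemma Antisym.eq_not_on_image (hA : Antisym x) {b : Bool} (h : ∀ u ∈ S, x u = b) :
    ∀ u ∈ pswap '' S, x u = !b := by
  rintro _ ⟨u, hu, rfl⟩
  rw [hA u, h u hu]

lemma not_compConst_of_image_pswap_eq (hS : IsComp C S) (hself : pswap '' S = S)
    (hA : Antisym x) : ¬ CompConst C x := by
  intro hx
  obtain ⟨w, hw⟩ := hS.nonempty
  have hw' : pswap w ∈ S := hself ▸ Set.mem_image_of_mem pswap hw
  have := hx.eq_of_mem hS hw hw'
  rw [hA w] at this
  exact Bool.not_ne_self (x w) this.symm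

lemma compConst_of_forall_mem_comp
    (h : ∀ u, ∃ T, IsComp C T ∧ u ∈ T ∧ ∀ v ∈ T, x v = x u) : CompConst C x := by
  intro u v huv
  obtain ⟨T, hT, hu, hconst⟩ := h u
  exact (hconst v (hT.mem_of_eqvGen hu huv)).symm

end

section

variable {V : Type*} {C : Set (V × V × V)} {x : Pairs V → Bool}
  {ι : Type*} {S : ι → Set (Pairs V)} {s : ι → Bool}

lemma antisym_of_cells (hcover : ∀ u, ∃ i, u ∈ S i ∪ pswap '' S i)
    (hs : ∀ i, (∀ u ∈ S i, x u = s i) ∧ (∀ u ∈ pswap '' S i, x u = !s i)) : Antisym x := by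
  intro u
  obtain ⟨i, hu | ⟨v, hv, rfl⟩⟩ := hcover u
  · rw [(hs i).1 u hu, (hs i).2 _ (Set.mem_image_of_mem pswap hu)]
  · rw [pswap_pswap, (hs i).1 v hv, (hs i).2 _ (Set.mem_image_of_mem pswap hv), Bool.not_not]

lemma compConst_of_cells (hcomp : ∀ i, IsComp C (S i))
    (hcover : ∀ u, ∃ i, u ∈ S i ∪ pswap '' S i)
    (hs : ∀ i, (∀ u ∈ S i, x u = s i) ∧ (∀ u ∈ pswap '' S i, x u = !s i)) :
    CompConst C x := by
  refine compConst_of_forall_mem_comp fun u => ?_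
  obtain ⟨i, hu | hu⟩ := hcover u
  · exact ⟨S i, hcomp i, hu, fun v hv => ((hs i).1 v hv).trans ((hs i).1 u hu).symm⟩
  · exact ⟨pswap '' S i, (hcomp i).image_pswap, hu,
      fun v hv => ((hs i).2 v hv).trans ((hs i).2 u hu).symm⟩

end

theorem stmt4_general {V : Type*} (C : Set (V × V × V)) :
    ((∃ S, IsComp C S ∧ pswap '' S = S) →
      ¬ ∃ x : Pairs V → Bool, Antisym x ∧ CompConst C x) ∧
    (∀ (k : ℕ) (S : Fin k → Set (Pairs V)),
      (∀ i, IsComp C (S i)) →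
      (∀ i, Disjoint (S i) (pswap '' S i)) →
      (∀ u : Pairs V, ∃! i, u ∈ S i ∪ pswap '' S i) →
      ∀ x : Pairs V → Bool,
        (Antisym x ∧ CompConst C x) ↔
        ∃ s : Fin k → Bool, ∀ i,
          (∀ u ∈ S i, x u = s i) ∧ (∀ u ∈ pswap '' S i, x u = !s i)) := by
  refine ⟨fun ⟨S, hS, hself⟩ ⟨x, hA, hx⟩ => not_compConst_of_image_pswap_eq hS hself hA hx, ?_⟩
  intro k S hcomp _ hpartition x
  have hcover : ∀ u, ∃ i, u ∈ S i ∪ pswap '' S i := fun u => (hpartition u).exists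
  constructor
  · rintro ⟨hA, hx⟩
    choose s hs using fun i => hx.exists_eq_on (hcomp i)
    exact ⟨s, fun i => ⟨hs i, hA.eq_not_on_image (hs i)⟩⟩
  · rintro ⟨s, hs⟩
    exact ⟨antisym_of_cells hcover hs, compConst_of_cells hcomp hcover hs⟩

/-- if some component `S` satisfies `S = S̄`, no assignment satisfies
antisymmetry plus the component-equality constraints; otherwise, given the complementary
pairs partition `S_1 ∪ S̄_1 ∪ ... ∪ S_k ∪ S̄_k`, the satisfying assignments are exactly
those obtained from a tuple `(s_1, ..., s_k) ∈ {0,1}^k` by setting `x = s_i` on `S_i`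
and `x = ¬ s_i` on `S̄_i`. -/
theorem stmt4 {V : Type*} [Fintype V] (C : Set (V × V × V))
    (hC : ∀ c ∈ C, c.1 ≠ c.2.1 ∧ c.2.1 ≠ c.2.2 ∧ c.1 ≠ c.2.2) :
    ((∃ S, IsComp C S ∧ pswap '' S = S) →
      ¬ ∃ x : Pairs V → Bool, Antisym x ∧ CompConst C x) ∧
    (∀ (k : ℕ) (S : Fin k → Set (Pairs V)),
      (∀ i, IsComp C (S i)) →
      (∀ i, Disjoint (S i) (pswap '' S i)) →
      (∀ u : Pairs V, ∃! i, u ∈ S i ∪ pswap '' S i) →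
      ∀ x : Pairs V → Bool,
        (Antisym x ∧ CompConst C x) ↔
        ∃ s : Fin k → Bool, ∀ i,
          (∀ u ∈ S i, x u = s i) ∧ (∀ u ∈ pswap '' S i, x u = !s i)) :=
  stmt4_general C
end

section
/- In particular, if the complementary pairs partition of the formula graph G_C exists with k complementary pairs of components, then the number of boolean assignments satisfying both antisymmetry and the component-equality constraints is exactly 2^k. -/
open Relation

theorem Relation.EqvGen.map_of_rel {α : Type*} {r : α → α → Prop} {σ : α → α}
    (hσ : ∀ u v, r u v → r (σ u) (σ v)) {u v : α} (h : EqvGen r u v) :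
    EqvGen r (σ u) (σ v) := by
  induction h with
  | rel a b hab => exact .rel _ _ (hσ a b hab)
  | refl a => exact .refl _
  | symm a b _ ih => exact .symm _ _ ih
  | trans a b c _ _ ih₁ ih₂ => exact .trans _ _ _ ih₁ ih₂

/-- The complementary pairs partition `⋃ᵢ (Sᵢ ∪ S̄ᵢ)` of the paper, with `S̄ᵢ = σ '' Sᵢ`. -/
structure IsComplementaryPartition {α ι : Type*} (σ : α → α) (r : α → α → Prop)
    (S : ι → Set α) : Prop where
  isClass : ∀ i, ∃ u, S i = {v | EqvGen r u v}
  disjoint : ∀ i, Disjoint (S i) (σ '' S i)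
  existsUnique : ∀ u, ∃! i, u ∈ S i ∪ σ '' S i

namespace IsComplementaryPartition

variable {α ι : Type*} {σ : α → α} {r : α → α → Prop} {S : ι → Set α}

theorem mem_of_eqvGen (hP : IsComplementaryPartition σ r S) {i : ι} {u v : α} (hu : u ∈ S i)
    (h : EqvGen r u v) : v ∈ S i := by
  obtain ⟨w, hw⟩ := hP.isClass i
  rw [hw] at hu ⊢
  exact .trans _ _ _ hu h

theorem eqvGen_of_mem (hP : IsComplementaryPartition σ r S) {i : ι} {u v : α} (hu : u ∈ S i)
    (hv : v ∈ S i) : EqvGen r u v := by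
  obtain ⟨w, hw⟩ := hP.isClass i
  rw [hw] at hu hv
  exact .trans _ _ _ (.symm _ _ hu) hv

noncomputable def rep (hP : IsComplementaryPartition σ r S) (i : ι) : α :=
  (hP.isClass i).choose

theorem rep_mem (hP : IsComplementaryPartition σ r S) (i : ι) : hP.rep i ∈ S i := by
  rw [(hP.isClass i).choose_spec]
  exact .refl _

noncomputable def index (hP : IsComplementaryPartition σ r S) (u : α) : ι :=
  (hP.existsUnique u).exists.choose

theorem mem_index (hP : IsComplementaryPartition σ r S) (u : α) :
    u ∈ S (hP.index u) ∪ σ '' S (hP.index u) :=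
  (hP.existsUnique u).exists.choose_spec

theorem index_eq (hP : IsComplementaryPartition σ r S) {u : α} {i : ι}
    (hu : u ∈ S i ∪ σ '' S i) : hP.index u = i :=
  (hP.existsUnique u).unique (hP.mem_index u) hu

noncomputable def assignment (hP : IsComplementaryPartition σ r S) (b : ι → Bool) (u : α) :
    Bool :=
  haveI := Classical.dec
  if u ∈ S (hP.index u) then b (hP.index u) else !b (hP.index u)

variable (hP : IsComplementaryPartition σ r S) (b : ι → Bool)

theorem assignment_of_mem {i : ι} {u : α} (hu : u ∈ S i) : hP.assignment b u = b i := by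
  obtain rfl := hP.index_eq (Or.inl hu)
  simp [assignment, hu]

theorem assignment_of_mem_image {i : ι} {u : α} (hu : u ∈ σ '' S i) :
    hP.assignment b u = !b i := by
  obtain rfl := hP.index_eq (Or.inr hu)
  have hu' : u ∉ S (hP.index u) := fun h => Set.disjoint_left.mp (hP.disjoint _) h hu
  simp [assignment, hu']

theorem mem_image_iff (hσ : σ.Involutive) {i : ι} {u : α} : u ∈ σ '' S i ↔ σ u ∈ S i := by
  rw [hσ.image_eq_preimage_symm, Set.mem_preimage]

theorem assignment_map (hσ : σ.Involutive) (u : α) :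
    hP.assignment b (σ u) = !hP.assignment b u := by
  rcases hP.mem_index u with hu | hu
  · rw [hP.assignment_of_mem_image b ((mem_image_iff hσ).2 (by rwa [hσ u])),
      hP.assignment_of_mem b hu]
  · rw [hP.assignment_of_mem b ((mem_image_iff hσ).1 hu), hP.assignment_of_mem_image b hu,
      Bool.not_not]

theorem assignment_eq_of_eqvGen (hσ : σ.Involutive) (hr : ∀ u v, r u v → r (σ u) (σ v))
    {u v : α} (h : EqvGen r u v) : hP.assignment b u = hP.assignment b v := by
  rcases hP.mem_index u with hu | hu
  · rw [hP.assignment_of_mem b hu, hP.assignment_of_mem b (hP.mem_of_eqvGen hu h)]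
  · have hv : v ∈ σ '' S (hP.index u) := by
      rw [mem_image_iff hσ] at hu ⊢
      exact hP.mem_of_eqvGen hu (h.map_of_rel hr)
    rw [hP.assignment_of_mem_image b hu, hP.assignment_of_mem_image b hv]

noncomputable def solutionEquiv (hσ : σ.Involutive)
    (hr : ∀ u v, r u v → r (σ u) (σ v)) :
    {x : α → Bool // (∀ u, x (σ u) = !x u) ∧ ∀ u v, EqvGen r u v → x u = x v} ≃ (ι → Bool) where
  toFun x i := x.1 (hP.rep i)
  invFun b := ⟨hP.assignment b, hP.assignment_map b hσ, fun _ _ =>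
    hP.assignment_eq_of_eqvGen b hσ hr⟩
  left_inv := by
    rintro ⟨x, hx_map, hx_eqv⟩
    ext u
    change hP.assignment (fun i => x (hP.rep i)) u = x u
    rcases hP.mem_index u with hu | hu
    · rw [hP.assignment_of_mem _ hu, hx_eqv _ _ (hP.eqvGen_of_mem (hP.rep_mem _) hu)]
    · rw [hP.assignment_of_mem_image _ hu,
        hx_eqv _ _ (hP.eqvGen_of_mem (hP.rep_mem _) ((mem_image_iff hσ).1 hu)), hx_map,
        Bool.not_not]
  right_inv b := funext fun i => hP.assignment_of_mem b (hP.rep_mem i)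

end IsComplementaryPartition

theorem pswap_involutive {V : Type*} : Function.Involutive (pswap (V := V)) := fun _ => rfl

theorem FGAdj.pswap {V : Type*} {C : Set (V × V × V)} {u v : Pairs V} (h : FGAdj C u v) :
    FGAdj C (pswap u) (pswap v) := by
  obtain ⟨c, hc, ⟨hu, hv⟩ | ⟨hu, hv⟩⟩ := h
  · exact ⟨c, hc, .inr ⟨by simp [_root_.pswap, hu], by simp [_root_.pswap, hv]⟩⟩
  · exact ⟨c, hc, .inl ⟨by simp [_root_.pswap, hu], by simp [_root_.pswap, hv]⟩⟩

theorem stmt5_general {V : Type*} (C : Set (V × V × V))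
    (k : ℕ) (S : Fin k → Set (Pairs V))
    (hcomp : ∀ i, IsComp C (S i))
    (hdisj : ∀ i, Disjoint (S i) (pswap '' S i))
    (hpart : ∀ u : Pairs V, ∃! i, u ∈ S i ∪ pswap '' S i) :
    Nat.card {x : Pairs V → Bool // Antisym x ∧ CompConst C x} = 2 ^ k := by
  have hP : IsComplementaryPartition pswap (FGAdj C) S := ⟨hcomp, hdisj, hpart⟩
  exact (Nat.card_congr (hP.solutionEquiv pswap_involutive fun _ _ => FGAdj.pswap)).trans
    (by simp)

/-- if the complementary pairs partition of the formula graph exists with `k`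
complementary pairs of components, then the number of assignments satisfying antisymmetry
and the component-equality constraints is exactly `2 ^ k`. -/
theorem stmt5 {V : Type*} [Fintype V] [DecidableEq V] (C : Set (V × V × V))
    (hC : ∀ c ∈ C, c.1 ≠ c.2.1 ∧ c.2.1 ≠ c.2.2 ∧ c.1 ≠ c.2.2)
    (k : ℕ) (S : Fin k → Set (Pairs V))
    (hcomp : ∀ i, IsComp C (S i))
    (hdisj : ∀ i, Disjoint (S i) (pswap '' S i))
    (hpart : ∀ u : Pairs V, ∃! i, u ∈ S i ∪ pswap '' S i) :
    Nat.card {x : Pairs V → Bool // Antisym x ∧ CompConst C x} = 2 ^ k :=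
  stmt5_general C k S hcomp hdisj hpart
end

section
/- For every n ≥ 4, the approval profile P_n with n voters and n candidates, where voter i approves exactly candidates i and i−1 (indices mod n), is not seemingly single-crossing: no linear order on the voters satisfies the induced NB constraints. -/
/-- A non-betweenness constraint `(i, j, k)` is satisfied by a strict order `r`
if `j` is not strictly between `i` and `k`. -/
def nbSat {V : Type*} (r : V → V → Prop) (c : V × V × V) : Prop :=
  ¬ (r c.1 c.2.1 ∧ r c.2.1 c.2.2) ∧ ¬ (r c.2.2 c.2.1 ∧ r c.2.1 c.1)

/-- Voter `v` strictly prefers candidate `a` to `b`: approves `a` but not `b`. -/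
def Pref {m n : ℕ} (P : Fin m → Fin n → Bool) (v : Fin n) (a b : Fin m) : Prop :=
  P a v = true ∧ P b v = false

/-- The set of NB constraints induced by an approval profile. -/
def CP {m n : ℕ} (P : Fin m → Fin n → Bool) : Set (Fin n × Fin n × Fin n) :=
  {t | ∃ a b, Pref P t.1 a b ∧ Pref P t.2.1 b a ∧ Pref P t.2.2 a b}

/-- The cyclic approval profile `P_n`: voter `v` approves exactly candidates `v` and
`v - 1` (modulo `n`). -/
def Pn (n : ℕ) : Fin n → Fin n → Bool :=
  fun c v => decide ((v : ℕ) = c ∨ (v : ℕ) = (c + 1) % n)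

/-!
Each candidate `a` is approved by exactly the two voters `a` and `a + 1`. For any third voter `j`
there is a candidate `b` that `j` approves and neither `a` nor `a + 1` does (namely `j`, or `j - 1`
when `j + 1 = a`; this is where `n ≥ 4` enters), so `(a, j, a + 1)` is an NB constraint: cyclically
consecutive voters must be adjacent in the order. But the last voter `M` of the order has two
distinct cyclic neighbours `M - 1` and `M + 1`, and only one of them can be adjacent to `M`.
-/

theorem IsStrictTotalOrder.exists_forall_ne_rel {α : Type*} [Finite α] [Nonempty α]
    (r : α → α → Prop) [IsStrictTotalOrder α r] : ∃ M, ∀ x ≠ M, r x M := by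
  classical
  let := linearOrderOfSTO r
  obtain ⟨M, hM⟩ := Finite.exists_max (id : α → α)
  exact ⟨M, fun x hx => lt_of_le_of_ne (hM x) hx⟩

open Fin.CommRing

section CyclicProfile

variable {n : ℕ} [NeZero n]

theorem Pn_eq_true_iff (c v : Fin n) : Pn n c v = true ↔ v = c ∨ v = c + 1 := by
  simp only [Pn, decide_eq_true_eq, Fin.ext_iff, Fin.val_add, Fin.val_one', Nat.add_mod_mod]

theorem pref_Pn_iff (v a b : Fin n) :
    Pref (Pn n) v a b ↔ (v = a ∨ v = a + 1) ∧ v ≠ b ∧ v ≠ b + 1 := by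
  simp only [Pref, ← Bool.not_eq_true, Pn_eq_true_iff]
  tauto

theorem mem_CP_Pn (hn : 4 ≤ n) {a j : Fin n} (hja : j ≠ a) (hja1 : j ≠ a + 1) :
    (a, j, a + 1) ∈ CP (Pn n) := by
  have h2 : (2 : Fin n) ≠ 0 := by simp [Fin.ext_iff, Nat.mod_eq_of_lt (by omega : 2 < n)]
  have h3 : (3 : Fin n) ≠ 0 := by simp [Fin.ext_iff, Nat.mod_eq_of_lt (by omega : 3 < n)]
  by_cases hj : j + 1 = a
  · refine ⟨a, j - 1, ?_⟩
    simp only [pref_Pn_iff]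
    grind
  · refine ⟨a, j, ?_⟩
    simp only [pref_Pn_iff]
    grind

end CyclicProfile

theorem not_nbSat_and_nbSat_of_rel {α : Type*} {r : α → α → Prop} [Std.Trichotomous r]
    {x y M : α} (hxM : r x M) (hyM : r y M) (hxy : x ≠ y) :
    ¬ (nbSat r (x, y, M) ∧ nbSat r (M, x, y)) := by
  rintro ⟨hx, hy⟩
  rcases trichotomous_of r x y with h | h | h
  · exact hx.1 ⟨h, hyM⟩
  · exact hxy h
  · exact hy.2 ⟨h, hxM⟩

/-- for every `n ≥ 4` the profile `P_n` is not seemingly single-crossing: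
no linear order on the voters satisfies the induced NB constraints. -/
theorem stmt16 (n : ℕ) (hn : 4 ≤ n) :
    ¬ ∃ r : Fin n → Fin n → Prop, IsStrictTotalOrder (Fin n) r ∧
        ∀ c ∈ CP (Pn n), nbSat r c := by
  rintro ⟨r, hr, hsat⟩
  have : NeZero n := ⟨by omega⟩
  have h1 : (1 : Fin n) ≠ 0 := by simp [Fin.ext_iff, Nat.mod_eq_of_lt (by omega : 1 < n)]
  have h2 : (2 : Fin n) ≠ 0 := by simp [Fin.ext_iff, Nat.mod_eq_of_lt (by omega : 2 < n)]
  obtain ⟨M, hM⟩ := IsStrictTotalOrder.exists_forall_ne_rel r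
  have hpred : M - 1 ≠ M := fun h => h1 (by linear_combination -h)
  have hsucc : M + 1 ≠ M := add_ne_left.mpr h1
  have hne : M - 1 ≠ M + 1 := fun h => h2 (by linear_combination -h)
  have hleft := hsat _ (mem_CP_Pn hn (a := M - 1) hne.symm (by rwa [sub_add_cancel]))
  rw [sub_add_cancel] at hleft
  exact not_nbSat_and_nbSat_of_rel (hM _ hpred) (hM _ hsucc) hne
    ⟨hleft, hsat _ (mem_CP_Pn hn hpred hne)⟩
end

section
/- Every proper subprofile of P_n (obtained by deleting at least one voter or candidate), for n ≥ 4, is seemingly single-crossing; hence the family {P_n : n ≥ 4} is an infinite family of minimal non-seemingly-single-crossing approval profiles, so possibly single-crossing approval profiles admit no characterization by finitely many forbidden subprofiles. -/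
/-- An approval profile (candidates `α`, voters `β`) is seemingly single-crossing: some
strict linear order on the voters admits no crossing pattern. -/
def SSCable {α β : Type*} (P : α → β → Bool) : Prop :=
  ∃ r : β → β → Prop, IsStrictTotalOrder β r ∧
    ¬ ∃ (i j k : β) (a b : α), r i j ∧ r j k ∧
      (P a i = true ∧ P b i = false) ∧
      (P b j = true ∧ P a j = false) ∧
      (P a k = true ∧ P b k = false)

/-- `Q` occurs as a subprofile of `P` (up to renaming of voters and candidates). -/
def Embeds {m' n' m n : ℕ} (Q : Fin m' → Fin n' → Bool)
    (P : Fin m → Fin n → Bool) : Prop :=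
  ∃ (f : Fin m' ↪ Fin m) (g : Fin n' ↪ Fin n), ∀ c v, Q c v = P (f c) (g v)

/-!
Cutting the cycle of voters at a missing voter, or between the two voters of a missing candidate,
orders the voters so that every remaining candidate is approved by consecutive voters, which
rules out crossings. Conversely, for any order on the voters of `P_n`, the two cyclic neighbours
of the first voter cannot both be its successor, so some voter `j` lies strictly between two
cyclically adjacent voters `x` and `x + 1`; candidate `x`, together with a candidate approved by
`j` but not by `x` or `x + 1` (which exists once `n ≥ 4`), forms a crossing. Finally, a finite set
of forbidden subprofiles would have to contain a subprofile of some `P_N` with fewer candidates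
than `P_N`; such a subprofile is SSC and therefore contains no forbidden subprofile.
-/

theorem pn_eq_true_iff {n : ℕ} [NeZero n] (c v : Fin n) :
    Pn n c v = true ↔ v = c ∨ v = c + 1 := by
  simp only [Pn, decide_eq_true_iff, Fin.ext_iff, Fin.val_add, Fin.val_one', Nat.add_mod_mod]

theorem pn_eq_false_iff {n : ℕ} [NeZero n] (c v : Fin n) :
    Pn n c v = false ↔ v ≠ c ∧ v ≠ c + 1 := by
  rw [Bool.eq_false_iff, Ne, pn_eq_true_iff, not_or]

theorem SSCable.comp {α β α' β' : Type*} {P : α → β → Bool} (hP : SSCable P) (f : α' → α)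
    {g : β' → β} (hg : Function.Injective g) : SSCable (fun c v => P (f c) (g v)) := by
  obtain ⟨r, hr, hno⟩ := hP
  refine ⟨fun i j => r (g i) (g j), ?_, fun ⟨i, j, k, a, b, h⟩ => hno ⟨g i, g j, g k, f a, f b, h⟩⟩
  exact
    { trichotomous := fun i j hij hji => hg (hr.trichotomous _ _ hij hji)
      irrefl := fun i => hr.irrefl (g i)
      trans := fun _ _ _ => hr.trans _ _ _ }

theorem sscable_of_convex {α β γ : Type*} [LinearOrder γ] (P : α → β → Bool) (K : β → γ)
    (hK : Function.Injective K)
    (hconv : ∀ a i j k, K i < K j → K j < K k → P a i = true → P a k = true → P a j = true) :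
    SSCable P := by
  let _ : LinearOrder β := LinearOrder.lift' K hK
  exact ⟨(· < ·), inferInstance, fun ⟨i, j, k, a, _, hij, hjk, ⟨hai, _⟩, ⟨_, haj⟩, ⟨hak, _⟩⟩ =>
    Bool.false_ne_true (haj ▸ hconv a i j k hij hjk hai hak)⟩

theorem sscable_pn_restrict {n : ℕ} (D W : Set (Fin n)) (h : D ≠ Set.univ ∨ W ≠ Set.univ) :
    SSCable (fun (c : D) (v : W) => Pn n c.1 v.1) := by
  obtain ⟨p, hp⟩ : ∃ p, p ∉ D ∨ p ∉ W := by
    simpa only [Set.ne_univ_iff_exists_notMem, exists_or] using h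
  obtain ⟨m, rfl⟩ : ∃ m, n = m + 1 := ⟨n - 1, by have := p.pos; omega⟩
  -- `K p = last` and `K (v + 1) = K v + 1`: the cycle is cut between `p` and `p + 1`.
  set K : Fin (m + 1) → Fin (m + 1) := fun v => v + (Fin.last m - p)
  refine sscable_of_convex _ (fun v : W => K v.1)
    ((add_left_injective _).comp Subtype.val_injective) fun a i j k hij hjk hai hak => ?_
  exfalso
  rw [pn_eq_true_iff] at hai hak
  have hik : i.1 ≠ k.1 := fun h => (hij.trans hjk).ne (by simp only [h])
  have hap : a.1 ≠ p := by
    intro hap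
    have : i.1 = a.1 ∨ k.1 = a.1 := by grind
    rcases hp with hD | hW
    · exact hD (hap ▸ a.2)
    · rcases this with h | h
      · exact hW (h.trans hap ▸ i.2)
      · exact hW (h.trans hap ▸ k.2)
  have hlast : K a.1 < Fin.last m :=
    (Fin.le_last _).lt_of_ne fun h => hap ((eq_sub_of_add_eq h).trans (sub_sub_cancel _ _))
  have hsucc : (K (a.1 + 1)).val = (K a.1).val + 1 := by
    rw [← Fin.val_add_one_of_lt hlast, add_right_comm]
  simp only [Fin.lt_def] at hij hjk
  rcases hai with hi | hi <;> rcases hak with hk | hk <;> simp only [hi, hk, hsucc] at hij hjk <;>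
    omega

theorem exists_between_self_and_perm {β : Type*} [Finite β] [Nonempty β] (r : β → β → Prop)
    [IsStrictTotalOrder β r] (σ : Equiv.Perm β) (hσ : ∀ y, σ y ≠ y) (hσσ : ∀ y, σ (σ y) ≠ y) :
    ∃ x j, (r x j ∧ r j (σ x)) ∨ (r (σ x) j ∧ r j x) := by
  obtain ⟨x₀, -, hmin⟩ :=
    (Finite.wellFounded_of_trans_of_irrefl r).has_min Set.univ Set.univ_nonempty
  have above : ∀ y, y ≠ x₀ → r x₀ y := fun y hy =>
    (trichotomous_of r x₀ y).resolve_right (not_or.2 ⟨hy.symm, hmin y trivial⟩)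
  rcases trichotomous_of r (σ x₀) (σ.symm x₀) with h | h | h
  · refine ⟨σ.symm x₀, σ x₀, Or.inr ⟨?_, h⟩⟩
    rw [Equiv.apply_symm_apply]
    exact above _ (hσ x₀)
  · exact (hσσ (σ.symm x₀) (by rw [Equiv.apply_symm_apply]; exact h)).elim
  · refine ⟨x₀, σ.symm x₀, Or.inl ⟨above _ fun e => hσ (σ.symm x₀) ?_, h⟩⟩
    rw [Equiv.apply_symm_apply, e]

section

open Fin.CommRing

theorem Fin.natCast_ne_zero_of_lt {n k : ℕ} [NeZero n] (h0 : 0 < k) (hk : k < n) :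
    (k : Fin n) ≠ 0 := by
  rw [Ne, Fin.natCast_eq_zero]
  exact Nat.not_dvd_of_pos_of_lt h0 hk

-- The witness is `j`, or `j - 1` when `j = x - 1`; then `n ≥ 4` gives `x - 2 ∉ {x - 1, x, x + 1}`.
theorem pn_exists_separating_candidate {n : ℕ} [NeZero n] (hn : 4 ≤ n) {x j : Fin n}
    (hjx : j ≠ x) (hjx₁ : j ≠ x + 1) :
    ∃ b, Pn n b j = true ∧ Pn n b x = false ∧ Pn n b (x + 1) = false := by
  simp only [pn_eq_true_iff, pn_eq_false_iff]
  by_cases hxj : x = j + 1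
  · subst hxj
    have h2 : (2 : Fin n) ≠ 0 := by exact_mod_cast Fin.natCast_ne_zero_of_lt two_pos (by omega)
    have h3 : (3 : Fin n) ≠ 0 := by exact_mod_cast Fin.natCast_ne_zero_of_lt three_pos (by omega)
    refine ⟨j - 1, Or.inr (by ring), ⟨fun h => h2 (by linear_combination h), fun h => ?_⟩,
      fun h => h3 (by linear_combination h), fun h => h2 (by linear_combination h)⟩
    exact hjx (by linear_combination -h)
  · exact ⟨j, Or.inl rfl, ⟨hjx.symm, hxj⟩, hjx₁.symm, fun h => hjx (add_right_cancel h).symm⟩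

theorem not_sscable_pn {n : ℕ} (hn : 4 ≤ n) : ¬ SSCable (Pn n) := by
  rintro ⟨r, hr, hno⟩
  have : NeZero n := ⟨by omega⟩
  have h1 : (1 : Fin n) ≠ 0 := by exact_mod_cast Fin.natCast_ne_zero_of_lt one_pos (by omega)
  have h2 : (2 : Fin n) ≠ 0 := by exact_mod_cast Fin.natCast_ne_zero_of_lt two_pos (by omega)
  have hx₁ : ∀ x : Fin n, x + 1 ≠ x := fun x h => h1 (by linear_combination h)
  have hx₂ : ∀ x : Fin n, x + 1 + 1 ≠ x := fun x h => h2 (by linear_combination h)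
  obtain ⟨x, j, hsep⟩ := exists_between_self_and_perm r (Equiv.addRight 1) hx₁ hx₂
  simp only [Equiv.coe_addRight] at hsep
  have hj : j ≠ x ∧ j ≠ x + 1 := by
    rcases hsep with ⟨h, h'⟩ | ⟨h, h'⟩ <;> constructor <;> rintro rfl <;> exact hr.irrefl _ ‹_›
  obtain ⟨b, hbj, hbx, hbx₁⟩ := pn_exists_separating_candidate hn hj.1 hj.2
  have hxx : Pn n x x = true := (pn_eq_true_iff _ _).2 (Or.inl rfl)
  have hxx₁ : Pn n x (x + 1) = true := (pn_eq_true_iff _ _).2 (Or.inr rfl)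
  have hxj : Pn n x j = false := (pn_eq_false_iff _ _).2 hj
  rcases hsep with ⟨h, h'⟩ | ⟨h, h'⟩
  · exact hno ⟨x, j, x + 1, x, b, h, h', ⟨hxx, hbx⟩, ⟨hbj, hxj⟩, ⟨hxx₁, hbx₁⟩⟩
  · exact hno ⟨x + 1, j, x, x, b, h, h', ⟨hxx₁, hbx₁⟩, ⟨hbj, hxj⟩, ⟨hxx, hbx⟩⟩

end

theorem sscable_of_embeds_pn {m' n' N : ℕ} {Q : Fin m' → Fin n' → Bool} (hm' : m' < N)
    (hQ : Embeds Q (Pn N)) : SSCable Q := by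
  obtain ⟨f, g, hfg⟩ := hQ
  have hf : Set.range f ≠ Set.univ := fun hf => by
    have := Fintype.card_le_of_surjective f (Set.range_eq_univ.mp hf)
    simp only [Fintype.card_fin] at this
    omega
  have := (sscable_pn_restrict _ Set.univ (Or.inl hf)).comp (fun c => ⟨f c, c, rfl⟩)
    (g := fun v => ⟨g v, trivial⟩) fun u v h => g.injective (congrArg Subtype.val h)
  rwa [← funext₂ hfg] at this

/-- for `n ≥ 4`, every proper subprofile of `P_n` (at least one candidate or
voter removed) is seemingly single-crossing while `P_n` itself is not; hence the `P_n` form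
an infinite family of minimal non-SSC profiles, and possibly single-crossing (= SSC)
approval profiles admit no characterization by finitely many forbidden subprofiles. -/
theorem stmt18 :
    (∀ n, 4 ≤ n → ∀ (D W : Set (Fin n)), (D ≠ Set.univ ∨ W ≠ Set.univ) →
      SSCable (fun (c : D) (v : W) => Pn n c.1 v.1)) ∧
    (∀ n, 4 ≤ n → ¬ SSCable (Pn n)) ∧
    ¬ ∃ s : Finset ((m' : ℕ) × (n' : ℕ) × (Fin m' → Fin n' → Bool)),
        ∀ (m n : ℕ) (P : Fin m → Fin n → Bool),
          SSCable P ↔ ∀ q ∈ s, ¬ Embeds q.2.2 P := by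
  refine ⟨fun _ _ => sscable_pn_restrict, fun _ => not_sscable_pn, ?_⟩
  rintro ⟨s, hs⟩
  set N := max 4 (s.sup Sigma.fst + 1)
  obtain ⟨q, hq, hqN⟩ : ∃ q ∈ s, Embeds q.2.2 (Pn N) := by
    by_contra! h
    exact not_sscable_pn (le_max_left _ _) ((hs N N _).2 h)
  have hqN_lt : q.1 < N := (Nat.lt_succ_of_le (Finset.le_sup hq)).trans_le (le_max_right _ _)
  exact (hs _ _ _).1 (sscable_of_embeds_pn hqN_lt hqN) q hq
    ⟨Function.Embedding.refl _, Function.Embedding.refl _, fun _ _ => rfl⟩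
end

section
/- If a profile of weak orders P = (≻_i)_{i∈[n]} is seemingly single-crossing with respect to a linear order ◁ on voters, then each ≻_i can be extended to a linear order ≻'_i such that the profile (≻'_i) is single-crossing with respect to ◁. Hence a profile of weak orders is seemingly single-crossing w.r.t. ◁ iff it is possibly single-crossing w.r.t. ◁. -/
/-!
Voter `t` breaks each tie of `≻_t` lexicographically: by the nearest earlier voter who is strict
on the pair (looking back through `t - 1, t - 2, …`), failing that by the earliest later voter who
is strict on it, failing that by a fixed linear order. For a fixed pair of candidates, the voter
who decides it under this rule moves weakly forward as `t` increases, so a crossing pattern in the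
extended profile is witnessed by strict preferences of three increasing voters, that is, by a
crossing pattern in the original profile.
-/

open Function

section StrictWeakOrder

variable {α : Type*} {r : α → α → Prop} [IsStrictWeakOrder α r] {a b c : α}

theorem IncompRel.trans (hab : IncompRel r a b) (hbc : IncompRel r b c) : IncompRel r a c :=
  IsStrictWeakOrder.incomp_trans a b c hab hbc

theorem rel_of_rel_of_incompRel (hab : r a b) (hbc : IncompRel r b c) : r a c := by
  by_contra hac
  have hac : IncompRel r a c := ⟨hac, fun hca => hbc.2 (_root_.trans hca hab)⟩
  exact (hac.trans hbc.symm).1 hab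

theorem rel_of_incompRel_of_rel (hab : IncompRel r a b) (hbc : r b c) : r a c := by
  by_contra hac
  have hac : IncompRel r a c := ⟨hac, fun hca => hab.2 (_root_.trans hbc hca)⟩
  exact (hab.symm.trans hac).1 hbc

end StrictWeakOrder

section LexRefine

variable {α ι κ : Type*} [LinearOrder κ]

def Decides (key : ι → κ) (W : ι → α → α → Prop) (i : ι) (a b : α) : Prop :=
  W i a b ∧ ∀ j, key j < key i → IncompRel (W j) a b

def lexRefine (key : ι → κ) (W : ι → α → α → Prop) (L : α → α → Prop) (a b : α) : Prop :=
  (∃ i, Decides key W i a b) ∨ ((∀ i, IncompRel (W i) a b) ∧ L a b)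

variable {key : ι → κ} {W : ι → α → α → Prop} {L : α → α → Prop} {a b : α}

theorem lexRefine_iff_of_forall_incompRel (h : ∀ i, IncompRel (W i) a b) :
    lexRefine key W L a b ↔ L a b := by
  refine ⟨?_, fun hL => .inr ⟨h, hL⟩⟩
  rintro (⟨i, hi, -⟩ | ⟨-, hL⟩)
  · exact ((h i).1 hi).elim
  · exact hL

theorem lexRefine_of_rel_of_forall_le {i : ι} (hi : ∀ j, key i ≤ key j) (h : W i a b) :
    lexRefine key W L a b :=
  .inl ⟨i, h, fun j hj => ((hi j).not_gt hj).elim⟩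

theorem lexRefine_isStrictTotalOrder [WellFoundedLT κ] (hkey : Injective key)
    [∀ i, IsStrictWeakOrder α (W i)] [IsStrictTotalOrder α L] :
    IsStrictTotalOrder α (lexRefine key W L) where
  irrefl a := by
    rintro (⟨i, hi, -⟩ | ⟨-, h⟩)
    · exact irrefl a hi
    · exact irrefl a h
  trans a b c := by
    rintro (⟨i, hi, hi'⟩ | ⟨hab, hL⟩) (⟨j, hj, hj'⟩ | ⟨hbc, hL'⟩)
    · refine .inl ?_
      rcases lt_trichotomy (key i) (key j) with h | h | h
      · exact ⟨i, rel_of_rel_of_incompRel hi (hj' i h),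
          fun k hk => (hi' k hk).trans (hj' k (hk.trans h))⟩
      · obtain rfl := hkey h
        exact ⟨i, _root_.trans hi hj, fun k hk => (hi' k hk).trans (hj' k hk)⟩
      · exact ⟨j, rel_of_incompRel_of_rel (hi' j h) hj,
          fun k hk => (hi' k (hk.trans h)).trans (hj' k hk)⟩
    · exact .inl ⟨i, rel_of_rel_of_incompRel hi (hbc i), fun k hk => (hi' k hk).trans (hbc k)⟩
    · exact .inl ⟨j, rel_of_incompRel_of_rel (hab j) hj, fun k hk => (hab k).trans (hj' k hk)⟩
    · exact .inr ⟨fun k => (hab k).trans (hbc k), _root_.trans hL hL'⟩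
  trichotomous a b hab hba := by
    by_contra hne
    by_cases hties : ∀ i, IncompRel (W i) a b
    · rw [lexRefine_iff_of_forall_incompRel hties] at hab
      rw [lexRefine_iff_of_forall_incompRel fun i => (hties i).symm] at hba
      exact (trichotomous_of L a b).elim hab fun h => h.elim hne hba
    · obtain ⟨i, hi, hleast⟩ := (InvImage.wf key wellFounded_lt).has_min
        {i | ¬IncompRel (W i) a b} (not_forall.mp hties)
      have hmin : ∀ j, key j < key i → IncompRel (W j) a b := fun j hj => by
        by_contra h
        exact hleast j h hj
      rcases not_incompRel_iff_symmGen.mp hi with h | h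
      · exact hab (.inl ⟨i, h, hmin⟩)
      · exact hba (.inl ⟨i, h, fun j hj => (hmin j hj).symm⟩)

end LexRefine

/-- The position of voter `y` in the order `x, x - 1, …, 0, x + 1, x + 2, …` in which voter `x`
consults the others. -/
def lookback (x y : ℕ) : ℕ :=
  if y ≤ x then x - y else y

theorem lookback_self (x : ℕ) : lookback x x = 0 := by
  simp [lookback]

theorem lookback_injective (x : ℕ) : Injective (lookback x) := by
  intro y y' h
  unfold lookback at h
  split_ifs at h <;> omega

theorem lookback_lt_lookback {x x' y y' : ℕ} (hy : y' < y) (hx : x ≤ x')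
    (h : lookback x y ≤ lookback x y') : lookback x' y < lookback x' y' := by
  unfold lookback at *
  split_ifs at * <;> omega

section Profile

variable {α ι : Type*}

/-- For a profile of weak orders this is the condition of being seemingly single-crossing. -/
def IsSingleCrossing (r : ι → ι → Prop) (P : ι → α → α → Prop) : Prop :=
  ¬∃ (i j k : ι) (a b : α), r i j ∧ r j k ∧ P i a b ∧ P j b a ∧ P k a b

theorem IsSingleCrossing.of_le {r : ι → ι → Prop} {P P' : ι → α → α → Prop}
    (hle : ∀ i a b, P i a b → P' i a b) (h : IsSingleCrossing r P') : IsSingleCrossing r P :=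
  fun ⟨i, j, k, a, b, hij, hjk, hi, hj, hk⟩ =>
    h ⟨i, j, k, a, b, hij, hjk, hle _ _ _ hi, hle _ _ _ hj, hle _ _ _ hk⟩

theorem exists_injective_nat_rel_iff_lt [Fintype ι] (r : ι → ι → Prop)
    [IsStrictTotalOrder ι r] : ∃ ρ : ι → ℕ, Injective ρ ∧ ∀ i j, r i j ↔ ρ i < ρ j := by
  classical
  set ρ : ι → ℕ := fun i => (Finset.univ.filter (r · i)).card
  have hρ : ∀ i j, r i j → ρ i < ρ j := fun i j hij => by
    refine Finset.card_lt_card ((Finset.ssubset_iff_of_subset ?_).mpr ⟨i, ?_⟩)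
    · intro k
      simpa using fun hki => _root_.trans hki hij
    · simpa using ⟨hij, irrefl i⟩
  refine ⟨ρ, fun i j h => ?_, fun i j => ⟨hρ i j, fun h => ?_⟩⟩
  · rcases trichotomous_of r i j with hij | rfl | hji
    · exact ((hρ i j hij).ne h).elim
    · rfl
    · exact ((hρ j i hji).ne h.symm).elim
  · rcases trichotomous_of r i j with hij | rfl | hji
    · exact hij
    · exact (lt_irrefl _ h).elim
    · exact ((hρ j i hji).asymm h).elim

variable (V : ι → α → α → Prop) (ρ : ι → ℕ) (L : α → α → Prop)

def lookbackRefinement (t : ι) : α → α → Prop :=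
  lexRefine (fun s => lookback (ρ t) (ρ s)) V L

variable {V ρ L}

theorem lookbackRefinement_of_rel {t : ι} {a b : α} (h : V t a b) :
    lookbackRefinement V ρ L t a b :=
  lexRefine_of_rel_of_forall_le (fun s => by simp [lookback_self]) h

theorem lookbackRefinement_isStrictTotalOrder (hρ : Injective ρ)
    [∀ i, IsStrictWeakOrder α (V i)] [IsStrictTotalOrder α L] (t : ι) :
    IsStrictTotalOrder α (lookbackRefinement V ρ L t) :=
  lexRefine_isStrictTotalOrder ((lookback_injective _).comp hρ)

theorem rank_lt_rank_of_decides [∀ i, IsStrictWeakOrder α (V i)] (hρ : Injective ρ)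
    {t t' s s' : ι} {a b : α} (htt' : ρ t ≤ ρ t')
    (hs : Decides (fun j => lookback (ρ t) (ρ j)) V s a b)
    (hs' : Decides (fun j => lookback (ρ t') (ρ j)) V s' b a) : ρ s < ρ s' := by
  rcases lt_trichotomy (ρ s) (ρ s') with h | h | h
  · exact h
  · obtain rfl := hρ h
    exact (asymm_of (V s) hs.1 hs'.1).elim
  · have hle : lookback (ρ t) (ρ s) ≤ lookback (ρ t) (ρ s') :=
      not_lt.mp fun hlt => (hs.2 s' hlt).2 hs'.1
    exact ((hs'.2 s (lookback_lt_lookback h htt' hle)).2 hs.1).elim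

theorem lookbackRefinement_isSingleCrossing [∀ i, IsStrictWeakOrder α (V i)]
    [IsStrictTotalOrder α L] (hρ : Injective ρ)
    (hsc : IsSingleCrossing (fun i j => ρ i < ρ j) V) :
    IsSingleCrossing (fun i j => ρ i < ρ j) (lookbackRefinement V ρ L) := by
  rintro ⟨i, j, k, a, b, hij, hjk, hi, hj, hk⟩
  by_cases hties : ∀ s, IncompRel (V s) a b
  · rw [lookbackRefinement, lexRefine_iff_of_forall_incompRel hties] at hi
    rw [lookbackRefinement, lexRefine_iff_of_forall_incompRel fun s => (hties s).symm] at hj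
    exact asymm hi hj
  obtain ⟨s₁, hs₁⟩ := hi.resolve_right fun h => hties h.1
  obtain ⟨s₂, hs₂⟩ := hj.resolve_right fun h => hties fun s => (h.1 s).symm
  obtain ⟨s₃, hs₃⟩ := hk.resolve_right fun h => hties h.1
  exact hsc ⟨s₁, s₂, s₃, a, b, rank_lt_rank_of_decides hρ hij.le hs₁ hs₂,
    rank_lt_rank_of_decides hρ hjk.le hs₂ hs₃, hs₁.1, hs₂.1, hs₃.1⟩

end Profile

/-- a profile of weak orders is seemingly single-crossing w.r.t. a linear
order `r` on the voters iff each weak order extends to a linear order such that the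
resulting profile is single-crossing w.r.t. `r` (i.e. SSC w.r.t. `r` iff possibly
single-crossing w.r.t. `r`). -/
theorem stmt19 {n m : ℕ} (P : Fin n → Fin m → Fin m → Prop)
    (hw : ∀ i, Irreflexive (P i) ∧ Transitive (P i) ∧
      Transitive (fun a b => ¬ P i a b ∧ ¬ P i b a))
    (r : Fin n → Fin n → Prop) (hr : IsStrictTotalOrder (Fin n) r) :
    (¬ ∃ (i j k : Fin n) (a b : Fin m),
        r i j ∧ r j k ∧ P i a b ∧ P j b a ∧ P k a b) ↔
    (∃ P' : Fin n → Fin m → Fin m → Prop,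
      (∀ i, IsStrictTotalOrder (Fin m) (P' i)) ∧
      (∀ i a b, P i a b → P' i a b) ∧
      ¬ ∃ (i j k : Fin n) (a b : Fin m),
          r i j ∧ r j k ∧ P' i a b ∧ P' j b a ∧ P' k a b) := by
  refine ⟨fun hssc => ?_, fun ⟨P', _, hext, hsc⟩ => IsSingleCrossing.of_le hext hsc⟩
  have : ∀ i, IsStrictWeakOrder (Fin m) (P i) := fun i =>
    { irrefl := (hw i).1, trans := @(hw i).2.1, incomp_trans := @(hw i).2.2 }
  obtain ⟨ρ, hρ, hrρ⟩ := exists_injective_nat_rel_iff_lt r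
  obtain rfl : r = fun i j => ρ i < ρ j := by
    funext i j
    exact propext (hrρ i j)
  exact ⟨lookbackRefinement P ρ (· < ·), lookbackRefinement_isStrictTotalOrder hρ,
    fun _ _ _ => lookbackRefinement_of_rel, lookbackRefinement_isSingleCrossing hρ hssc⟩
end
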